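/- arXiv:q-bio/0610057 — 4 statements merged into one kernel-verified Lean document; each statement's English description precedes it below -/
import Mathlib

section
/- For p ∈ [0,1] and β₀, τ₀ > 0, let p₁ = 1 - p + p·exp(-2β₀τ₀) and p₁ᵇᵒⁿᵈ = (1 - p + p·exp(-β₀τ₀))². Then p₁ - p₁ᵇᵒⁿᵈ = p(1-p)(1 - exp(-β₀τ₀))², and hence p₁ ≥ p₁ᵇᵒⁿᵈ with equality if and only if p = 0 or p = 1. -/
open Real Set

/-! The gap `p₁ - p₁ᵇᵒⁿᵈ` is the variance of the per-edge escape probability, which equals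
`exp (-β₀τ₀)` with probability `p` and `1` with probability `1 - p`; a two-point variance is
`p (1 - p)` times the squared distance of the two points, and here the points differ. -/

section Mixture

variable {R : Type*}

theorem mixture_sq_gap_eq [CommRing R] (p x : R) :
    (1 - p + p * x ^ 2) - (1 - p + p * x) ^ 2 = p * (1 - p) * (1 - x) ^ 2 := by
  ring

theorem mixture_sq_le [CommRing R] [LinearOrder R] [IsStrictOrderedRing R] {p : R}
    (hp₀ : 0 ≤ p) (hp₁ : p ≤ 1) (x : R) :
    (1 - p + p * x) ^ 2 ≤ 1 - p + p * x ^ 2 := by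
  have hgap : 0 ≤ p * (1 - p) * (1 - x) ^ 2 := by
    have : 0 ≤ 1 - p := sub_nonneg.mpr hp₁
    positivity
  linarith [mixture_sq_gap_eq p x]

theorem mixture_sq_eq_iff [CommRing R] [IsDomain R] {x : R} (hx : x ≠ 1) (p : R) :
    1 - p + p * x ^ 2 = (1 - p + p * x) ^ 2 ↔ p = 0 ∨ p = 1 := by
  have hx' : (1 - x) ^ 2 ≠ 0 := pow_ne_zero 2 (sub_ne_zero.mpr hx.symm)
  rw [← sub_eq_zero, mixture_sq_gap_eq, mul_eq_zero, or_iff_left hx', mul_eq_zero,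
    sub_eq_zero, eq_comm (a := 1)]

end Mixture

/-- For `p ∈ [0,1]` and `β₀, τ₀ > 0`, with
`p₁ = 1 - p + p·exp(-2β₀τ₀)` and `p₁ᵇᵒⁿᵈ = (1 - p + p·exp(-β₀τ₀))²`, we have
`p₁ - p₁ᵇᵒⁿᵈ = p(1-p)(1 - exp(-β₀τ₀))²`, hence `p₁ ≥ p₁ᵇᵒⁿᵈ` with equality iff
`p = 0` or `p = 1`. -/
theorem stmt_0 (p β₀ τ₀ : ℝ) (hp : p ∈ Icc (0:ℝ) 1) (hβ : 0 < β₀) (hτ : 0 < τ₀) :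
    (1 - p + p * exp (-(2 * β₀ * τ₀))) - (1 - p + p * exp (-(β₀ * τ₀)))^2
      = p * (1 - p) * (1 - exp (-(β₀ * τ₀)))^2 ∧
    (1 - p + p * exp (-(β₀ * τ₀)))^2 ≤ 1 - p + p * exp (-(2 * β₀ * τ₀)) ∧
    ((1 - p + p * exp (-(2 * β₀ * τ₀))) = (1 - p + p * exp (-(β₀ * τ₀)))^2 ↔
      p = 0 ∨ p = 1) := by
  have hsq : exp (-(2 * β₀ * τ₀)) = exp (-(β₀ * τ₀)) ^ 2 := by
    rw [← exp_nat_mul]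
    ring_nf
  have hlt : exp (-(β₀ * τ₀)) < 1 := exp_lt_one_iff.mpr (neg_neg_of_pos (mul_pos hβ hτ))
  rw [hsq]
  exact ⟨mixture_sq_gap_eq p _, mixture_sq_le hp.1 hp.2 _, mixture_sq_eq_iff hlt.ne p⟩
end

section
/- Suppose H_r and H_u are power series with nonnegative coefficients on [0,1] satisfying H_r(z) = z·G_r(H_r(z), 1, H_u(z)) and H_u(z) = z·G_u(H_r(z), 1, H_u(z)), where G_r = G_u as functions. Then H_r(z) = H_u(z) for all z ∈ [0,1], and the common function H₁ satisfies H₁(z) = (z/𝒢′(1))·𝒢′(1 - T + T·H₁(z)). -/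
/-!
With `x = u` and `y = 1`, the argument of `𝒢'` in `G` no longer depends on the transmissibility
`T_τ`: it is `1 - T + T x`. The integral then collapses to `𝒢'(1 - T + T x) · ∫ T_τ dF = 𝒢'(1 - T + T x) · T`.
Since `G_r = G_u`, the two fixed-point equations have the same right-hand side, so `H_r = H_u`,
and substituting this into `G_r` gives the equation for `H₁`.
-/

open MeasureTheory Set

lemma transmission_arg_diag (t T x : ℝ) :
    (1 - t) * (1 - T) + (1 - t) * T * x + t * (1 - T) * 1 + t * T * x = 1 - T + T * x := by
  ring

lemma integral_transmission_diag {α : Type*} [MeasurableSpace α] {F : Measure α} {Tt : α → ℝ} {T : ℝ}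
    (hT : T = ∫ s, Tt s ∂F) (hT0 : T ≠ 0) (𝒢d : ℝ → ℝ) (x : ℝ) :
    (∫ τ, 𝒢d ((1 - Tt τ) * (1 - T) + (1 - Tt τ) * T * x
        + Tt τ * (1 - T) * 1 + Tt τ * T * x) * Tt τ ∂F) / (T * 𝒢d 1)
      = 𝒢d (1 - T + T * x) / 𝒢d 1 := by
  simp only [transmission_arg_diag]
  rw [integral_const_mul, ← hT, mul_comm (𝒢d _), mul_div_mul_left _ _ hT0]

theorem stmt_10_general (F : Measure ℝ)
    (Tt : ℝ → ℝ)
    (T : ℝ) (hT : T = ∫ s, Tt s ∂F) (hT0 : 0 < T)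
    (𝒢d : ℝ → ℝ) -- 𝒢d = 𝒢', the derivative of the contact-network degree pgf
    (Gr Gu : ℝ → ℝ → ℝ → ℝ)
    (hGrGu : Gr = Gu)
    (hGr : ∀ x y u : ℝ, Gr x y u =
      (∫ τ, 𝒢d ((1 - Tt τ) * (1 - T) + (1 - Tt τ) * T * x
          + Tt τ * (1 - T) * y + Tt τ * T * u) * Tt τ ∂F) / (T * 𝒢d 1))
    (Hr Hu : ℝ → ℝ)
    (hHr : ∀ z ∈ Icc (0:ℝ) 1, Hr z = z * Gr (Hr z) 1 (Hu z))
    (hHu : ∀ z ∈ Icc (0:ℝ) 1, Hu z = z * Gu (Hr z) 1 (Hu z)) :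
    ∀ z ∈ Icc (0:ℝ) 1,
      Hr z = Hu z ∧ Hr z = z / 𝒢d 1 * 𝒢d (1 - T + T * Hr z) := by
  intro z hz
  have hru : Hr z = Hu z := (hHr z hz).trans (hGrGu ▸ (hHu z hz).symm)
  refine ⟨hru, ?_⟩
  calc Hr z = z * Gr (Hr z) 1 (Hr z) := hru ▸ hHr z hz
    _ = z * (𝒢d (1 - T + T * Hr z) / 𝒢d 1) := by
      rw [hGr, integral_transmission_diag hT hT0.ne']
    _ = z / 𝒢d 1 * 𝒢d (1 - T + T * Hr z) := by ring

/-- Suppose `H_r` and `H_u` satisfy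
`H_r(z) = z·G_r(H_r(z), 1, H_u(z))` and `H_u(z) = z·G_u(H_r(z), 1, H_u(z))` on
`[0,1]`, where `G_r = G_u` (as given by the common integral formula
`(T𝒢'(1))⁻¹ ∫ 𝒢'(g(x,y,u|τ)) T_τ dF(τ)`). Then `H_r(z) = H_u(z)` for all
`z ∈ [0,1]`, and the common function satisfies
`H₁(z) = (z/𝒢'(1))·𝒢'(1 - T + T·H₁(z))`. -/
theorem stmt_10 (F : Measure ℝ) [IsProbabilityMeasure F]
    (Tt : ℝ → ℝ) (hTtmeas : Measurable Tt) (hTt01 : ∀ τ, Tt τ ∈ Icc (0:ℝ) 1)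
    (hTtInt : Integrable Tt F)
    (T : ℝ) (hT : T = ∫ s, Tt s ∂F) (hT0 : 0 < T)
    (𝒢d : ℝ → ℝ) -- 𝒢d = 𝒢', the derivative of the contact-network degree pgf
    (hd1 : 𝒢d 1 ≠ 0)
    (Gr Gu : ℝ → ℝ → ℝ → ℝ)
    (hGrGu : Gr = Gu)
    (hGr : ∀ x y u : ℝ, Gr x y u =
      (∫ τ, 𝒢d ((1 - Tt τ) * (1 - T) + (1 - Tt τ) * T * x
          + Tt τ * (1 - T) * y + Tt τ * T * u) * Tt τ ∂F) / (T * 𝒢d 1))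
    (Hr Hu : ℝ → ℝ)
    (hHr : ∀ z ∈ Icc (0:ℝ) 1, Hr z = z * Gr (Hr z) 1 (Hu z))
    (hHu : ∀ z ∈ Icc (0:ℝ) 1, Hu z = z * Gu (Hr z) 1 (Hu z)) :
    ∀ z ∈ Icc (0:ℝ) 1,
      Hr z = Hu z ∧ Hr z = z / 𝒢d 1 * 𝒢d (1 - T + T * Hr z) :=
  stmt_10_general F Tt T hT hT0 𝒢d Gr Gu hGrGu hGr Hr Hu hHr hHu
end

section
/- Let 𝒢 be a pgf (power series with nonnegative coefficients, 𝒢(1)=1), T_τ a [0,1]-valued random variable with mean T, and let H_*^{out}(z) ≥ H_*^{in}(z) for a fixed z ∈ [0,1]. Then H^{out}(z) := z·E[𝒢(1 - T_τ + T_τ·H_*^{out}(z))] ≥ z·𝒢(1 - T + T·H_*^{in}(z)) =: H^{in}(z). Hence the pgf of out-component sizes dominates the pgf of in-component sizes pointwise on [0,1]. -/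
/-!
The map `t ↦ 𝒢 (1 - t + t h)` is convex on `[0, 1]`, so Jensen's inequality in `T_τ` gives
`𝒢 (1 - T + T H_*^{out}) ≤ E[𝒢 (1 - T_τ + T_τ H_*^{out})]`; monotonicity of `𝒢` then lets
`H_*^{out}(z)` be replaced by the smaller `H_*^{in}(z)`. A convex function on `[0, 1]` may jump at
the endpoints, so Jensen's inequality is proved through a supporting line at the mean, which is
interior unless the random variable is a.s. constant.
-/

open MeasureTheory Set

namespace ConvexOn

variable {s : Set ℝ} {g : ℝ → ℝ}

theorem add_rightDeriv_mul_sub_le (hg : ConvexOn ℝ s g) {c y : ℝ} (hc : c ∈ interior s)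
    (hy : y ∈ s) : g c + derivWithin g (Ioi c) c * (y - c) ≤ g y := by
  rcases lt_trichotomy y c with hyc | rfl | hcy
  · have hslope := (hg.slope_le_leftDeriv_of_mem_interior hy hc hyc).trans
      (hg.leftDeriv_le_rightDeriv_of_mem_interior hc)
    rw [slope_def_field, div_le_iff₀ (sub_pos.2 hyc)] at hslope
    linarith [mul_neg (derivWithin g (Ioi c) c) (c - y)]
  · simp
  · have hslope := hg.rightDeriv_le_slope_of_mem_interior hc hy hcy
    rw [slope_def_field, le_div_iff₀ (sub_pos.2 hcy)] at hslope
    linarith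

theorem map_integral_le_of_real {Ω : Type*} [MeasurableSpace Ω] {μ : Measure Ω}
    [IsProbabilityMeasure μ] (hg : ConvexOn ℝ s g) (hsc : IsClosed s) {f : Ω → ℝ}
    (hfs : ∀ᵐ ω ∂μ, f ω ∈ s) (hfi : Integrable f μ) (hgi : Integrable (g ∘ f) μ) :
    g (∫ ω, f ω ∂μ) ≤ ∫ ω, g (f ω) ∂μ := by
  rcases hg.1.ordConnected.strictConvex.ae_eq_const_or_average_mem_interior hsc hfs hfi with
    hconst | hinterior
  · rw [average_eq_integral] at hconst
    rw [show (fun ω => g (f ω)) = g ∘ f from rfl, integral_congr_ae (hconst.fun_comp g)]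
    simp
  · rw [average_eq_integral] at hinterior
    set c := ∫ ω, f ω ∂μ
    set d := derivWithin g (Ioi c) c
    have hline : Integrable (fun ω => d * (f ω - c)) μ :=
      (hfi.sub (integrable_const c)).const_mul d
    calc g c = ∫ ω, (g c + d * (f ω - c)) ∂μ := by
          rw [integral_add (integrable_const _) hline, integral_const_mul,
            integral_sub hfi (integrable_const c)]
          simp [c]
      _ ≤ ∫ ω, g (f ω) ∂μ := integral_mono_ae ((integrable_const _).add hline) hgi
          (by filter_upwards [hfs] with ω hω using hg.add_rightDeriv_mul_sub_le hinterior hω)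

end ConvexOn

theorem one_sub_add_mul_mem_Icc {t b : ℝ} (ht : t ∈ Icc (0 : ℝ) 1) (hb : b ∈ Icc (0 : ℝ) 1) :
    1 - t + t * b ∈ Icc (0 : ℝ) 1 :=
  ⟨by nlinarith [ht.1, ht.2, hb.1], by nlinarith [ht.1, hb.2]⟩

theorem ConvexOn.comp_one_sub_add_mul {g : ℝ → ℝ} (hg : ConvexOn ℝ (Icc 0 1) g) {b : ℝ}
    (hb : b ∈ Icc (0 : ℝ) 1) : ConvexOn ℝ (Icc 0 1) (fun t => g (1 - t + t * b)) := by
  have hline : ∀ t : ℝ, AffineMap.lineMap 1 b t = 1 - t + t * b := fun t => by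
    rw [AffineMap.lineMap_apply_ring']; ring
  have hmaps : Icc (0 : ℝ) 1 ⊆ AffineMap.lineMap (1 : ℝ) b ⁻¹' Icc 0 1 := fun t ht => by
    rw [mem_preimage, hline]; exact one_sub_add_mul_mem_Icc ht hb
  simpa only [Function.comp_def, hline] using
    (hg.comp_affineMap (AffineMap.lineMap 1 b)).subset hmaps (convex_Icc 0 1)

theorem stmt_14_general {Ω : Type*} [m0 : MeasurableSpace Ω] (μ : Measure Ω)
    [IsProbabilityMeasure μ]
    (𝒢 : ℝ → ℝ) (h𝒢conv : ConvexOn ℝ (Icc (0:ℝ) 1) 𝒢)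
    (h𝒢mono : MonotoneOn 𝒢 (Icc (0:ℝ) 1))
    (Tt : Ω → ℝ) (hTt01 : ∀ ω, Tt ω ∈ Icc (0:ℝ) 1)
    (hTtInt : Integrable Tt μ)
    (T : ℝ) (hT : T = ∫ ω, Tt ω ∂μ)
    (Hso Hsi : ℝ → ℝ)
    (hHsomem : ∀ z ∈ Icc (0:ℝ) 1, Hso z ∈ Icc (0:ℝ) 1)
    (hHsimem : ∀ z ∈ Icc (0:ℝ) 1, Hsi z ∈ Icc (0:ℝ) 1)
    (hdom : ∀ z ∈ Icc (0:ℝ) 1, Hsi z ≤ Hso z)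
    (hInt : ∀ z ∈ Icc (0:ℝ) 1,
      Integrable (fun ω => 𝒢 (1 - Tt ω + Tt ω * Hso z)) μ) :
    ∀ z ∈ Icc (0:ℝ) 1,
      z * 𝒢 (1 - T + T * Hsi z)
        ≤ z * ∫ ω, 𝒢 (1 - Tt ω + Tt ω * Hso z) ∂μ := by
  intro z hz
  have hT01 : T ∈ Icc (0 : ℝ) 1 :=
    hT ▸ (convex_Icc 0 1).integral_mem isClosed_Icc (ae_of_all _ hTt01) hTtInt
  have hmono : 𝒢 (1 - T + T * Hsi z) ≤ 𝒢 (1 - T + T * Hso z) :=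
    h𝒢mono (one_sub_add_mul_mem_Icc hT01 (hHsimem z hz))
      (one_sub_add_mul_mem_Icc hT01 (hHsomem z hz))
      (by gcongr; exacts [hT01.1, hdom z hz])
  have hjensen : 𝒢 (1 - T + T * Hso z) ≤ ∫ ω, 𝒢 (1 - Tt ω + Tt ω * Hso z) ∂μ :=
    hT ▸ (h𝒢conv.comp_one_sub_add_mul (hHsomem z hz)).map_integral_le_of_real isClosed_Icc
      (ae_of_all _ hTt01) hTtInt (hInt z hz)
  exact mul_le_mul_of_nonneg_left (hmono.trans hjensen) hz.1

/-- Let `𝒢` be a pgf (convex, nondecreasing on `[0,1]`, `𝒢(1)=1`),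
`T_τ` a `[0,1]`-valued random variable with mean `T`, and suppose
`H_*^{out}(z) ≥ H_*^{in}(z)` for `z ∈ [0,1]`. Then
`H^{out}(z) = z·E[𝒢(1 - T_τ + T_τ·H_*^{out}(z))] ≥ z·𝒢(1 - T + T·H_*^{in}(z)) = H^{in}(z)`,
i.e. the pgf of out-component sizes dominates the pgf of in-component sizes
pointwise on `[0,1]`. -/
theorem stmt_14 {Ω : Type*} [m0 : MeasurableSpace Ω] (μ : Measure Ω)
    [IsProbabilityMeasure μ]
    (𝒢 : ℝ → ℝ) (h𝒢conv : ConvexOn ℝ (Icc (0:ℝ) 1) 𝒢)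
    (h𝒢mono : MonotoneOn 𝒢 (Icc (0:ℝ) 1)) (h𝒢1 : 𝒢 1 = 1)
    (Tt : Ω → ℝ) (hTtmeas : Measurable Tt) (hTt01 : ∀ ω, Tt ω ∈ Icc (0:ℝ) 1)
    (hTtInt : Integrable Tt μ)
    (T : ℝ) (hT : T = ∫ ω, Tt ω ∂μ)
    (Hso Hsi : ℝ → ℝ)
    (hHsomem : ∀ z ∈ Icc (0:ℝ) 1, Hso z ∈ Icc (0:ℝ) 1)
    (hHsimem : ∀ z ∈ Icc (0:ℝ) 1, Hsi z ∈ Icc (0:ℝ) 1)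
    (hdom : ∀ z ∈ Icc (0:ℝ) 1, Hsi z ≤ Hso z)
    (hInt : ∀ z ∈ Icc (0:ℝ) 1,
      Integrable (fun ω => 𝒢 (1 - Tt ω + Tt ω * Hso z)) μ) :
    ∀ z ∈ Icc (0:ℝ) 1,
      z * 𝒢 (1 - T + T * Hsi z)
        ≤ z * ∫ ω, 𝒢 (1 - Tt ω + Tt ω * Hso z) ∂μ :=
  stmt_14_general (m0 := m0) μ 𝒢 h𝒢conv h𝒢mono Tt hTt01 hTtInt T hT Hso Hsi hHsomem hHsimem hdom
    hInt
end

section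
/- Consider the stochastic SIR epidemic determined by importation times (t_{0i}), recovery periods r, and infectious contact intervals τ_{ij} ∈ (0,∞], run by the rule t_j = min over i of (t_{0j}, t_i + τ_{ij}) realized through the epidemic algorithm. Define the epidemic percolation network with an edge from i to j whenever τ_{ij} < ∞. Then node j is eventually infected (t_j < ∞) if and only if j lies in the out-component, in this network, of some node i with t_{0i} < ∞. -/
open scoped ENNReal

/-! The infection times `t` form the greatest subsolution of the min-plus system
`s j ≤ t0 j`, `s j ≤ s i + τ i j`. Along a path of finite contact intervals from an imported
case, any subsolution stays below a finite sum. Conversely, the set of nodes reachable from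
imported cases is closed under finite edges, so raising `t` to `⊤` outside it still gives a
subsolution, and maximality of `t` forces `t = ⊤` off that set. -/

namespace Epidemic

variable {ι : Type*} {t0 s : ι → ℝ≥0∞} {τ : ι → ι → ℝ≥0∞}

variable (t0 τ) in
def IsSubsolution (s : ι → ℝ≥0∞) : Prop :=
  (∀ j, s j ≤ t0 j) ∧ ∀ i j, s j ≤ s i + τ i j

theorem isSubsolution_of_eq_min (hsol : ∀ j, s j = min (t0 j) (⨅ i, s i + τ i j)) :
    IsSubsolution t0 τ s :=
  ⟨fun j => (hsol j).trans_le (min_le_left _ _),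
    fun i j => (hsol j).trans_le ((min_le_right _ _).trans (iInf_le _ i))⟩

theorem IsSubsolution.lt_top_of_reflTransGen (hs : IsSubsolution t0 τ s) {i j : ι}
    (hi : t0 i < ⊤) (hij : Relation.ReflTransGen (fun a b => τ a b < ⊤) i j) : s j < ⊤ := by
  induction hij with
  | refl => exact (hs.1 i).trans_lt hi
  | tail _ hbc ih => exact (hs.2 _ _).trans_lt (ENNReal.add_lt_top.mpr ⟨ih, hbc⟩)

theorem IsSubsolution.ite_top (hs : IsSubsolution t0 τ s) {R : ι → Prop} [DecidablePred R]
    (hR0 : ∀ k, t0 k < ⊤ → R k) (hRstep : ∀ i k, R i → τ i k < ⊤ → R k) :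
    IsSubsolution t0 τ fun k => if R k then s k else ⊤ := by
  refine ⟨fun k => ?_, fun i k => ?_⟩
  · by_cases hk : R k
    · simpa [hk] using hs.1 k
    · simpa [hk] using mt (hR0 k) hk
  · by_cases hi : R i
    · by_cases hik : τ i k < ⊤
      · simpa [hi, hRstep i k hi hik] using hs.2 i k
      · simp [not_lt_top_iff.mp hik]
    · simp [hi]

end Epidemic

open Epidemic in
theorem stmt_16_general (n : ℕ) (τ : Fin n → Fin n → ℝ≥0∞)
    (t0 t : Fin n → ℝ≥0∞)
    (hsol : ∀ j, t j = min (t0 j) (⨅ i, t i + τ i j))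
    (hgreatest : ∀ s : Fin n → ℝ≥0∞,
      (∀ j, s j ≤ t0 j) → (∀ i j, s j ≤ s i + τ i j) → s ≤ t) :
    ∀ j : Fin n, t j < ⊤ ↔
      ∃ i : Fin n, t0 i < ⊤ ∧ Relation.ReflTransGen (fun a b => τ a b < ⊤) i j := by
  classical
  have ht : IsSubsolution t0 τ t := isSubsolution_of_eq_min hsol
  intro j
  refine ⟨fun htj => ?_, fun ⟨i, hi, hij⟩ => ht.lt_top_of_reflTransGen hi hij⟩
  by_contra hj
  have hR := ht.ite_top (R := fun k => ∃ i, t0 i < ⊤ ∧ Relation.ReflTransGen _ i k)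
    (fun k hk => ⟨k, hk, .refl⟩) (fun _ _ ⟨i, hi, hij⟩ hik => ⟨i, hi, hij.tail hik⟩)
  have htop := hgreatest _ hR.1 hR.2 j
  simp only [hj, if_false, top_le_iff] at htop
  exact htj.ne htop

/-- For the stochastic SIR epidemic determined by importation times
`t0`, and infectious contact intervals `τ i j ∈ (0,∞]`, with infection times `t`
given as the greatest solution of `t j = min (t0 j) (⨅ i, t i + τ i j)`
(the epidemic algorithm), node `j` is eventually infected (`t j < ∞`) iff `j`
lies in the out-component (directed reachability along edges with `τ i j < ∞`)
of some node `i` with `t0 i < ∞`. -/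
theorem stmt_16 (n : ℕ) (τ : Fin n → Fin n → ℝ≥0∞) (hτ : ∀ i j, 0 < τ i j)
    (t0 t : Fin n → ℝ≥0∞)
    (hsol : ∀ j, t j = min (t0 j) (⨅ i, t i + τ i j))
    (hgreatest : ∀ s : Fin n → ℝ≥0∞,
      (∀ j, s j ≤ t0 j) → (∀ i j, s j ≤ s i + τ i j) → s ≤ t) :
    ∀ j : Fin n, t j < ⊤ ↔
      ∃ i : Fin n, t0 i < ⊤ ∧ Relation.ReflTransGen (fun a b => τ a b < ⊤) i j :=
  stmt_16_general n τ t0 t hsol hgreatest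
end
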